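/- Let (V, μ) be a weighted graph of finite measure with a rooted spanning tree (root a), and let f ∈ ℓ¹(V,μ) with Σ_{s∈V} f(s)μ(s) = 0. With f_t defined by f_t(t) = f(t) + (1/μ(t)) Σ_{k ≻ t} f(k)μ(k), f_t(t_p) = −(1/μ(t_p)) Σ_{k ⪰ t} f(k)μ(k), and f_t(s) = 0 otherwise, the decomposition f(s) = Σ_{t ∈ V, t ≠ a} f_t(s) holds for every s ∈ V (including the root, using the mean-zero hypothesis). -/

import Mathlib

open Classical

/-- Rooted spanning tree encoded by a parent map: `s ⪰ t` iff `∃ n, p^[n] s = t`;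
the shadow of `t` is `S_t = {s | s ⪰ t}`. -/
def shadow {V : Type*} (p : V → V) (t : V) : Set V :=
  {s | ∃ n : ℕ, p^[n] s = t}

/-- The decomposition functions: for a vertex `t` (other than the root), `f_t` is supported
on `{t, t_p}` (`t_p = p t` is the parent of `t`) with
`f_t(t) = f(t) + (1/μ(t)) ∑_{k ≻ t} f(k) μ(k)` and
`f_t(t_p) = -(1/μ(t_p)) ∑_{k ⪰ t} f(k) μ(k)`. -/
noncomputable def decompFn {V : Type*} (p : V → V) (μ f : V → ℝ) (t : V) : V → ℝ :=
  fun s =>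
    if s = t then
      f t + (1 / μ t) * ∑' k : {k : V // k ∈ shadow p t ∧ k ≠ t}, f k.1 * μ k.1
    else if s = p t then
      -((1 / μ (p t)) * ∑' k : shadow p t, f k.1 * μ k.1)
    else 0

/-!
Fix `s`. Only two kinds of `t` contribute to `∑_{t ≠ a} f_t(s)`: `t = s` (when `s ≠ a`), giving
`f(s) + μ(s)⁻¹ ∑_{k ≻ s} f(k)μ(k)`, and the children `t` of `s`, each giving
`-μ(s)⁻¹ ∑_{k ⪰ t} f(k)μ(k)`. Since the only cycle of the parent map is the loop at the root,
`{k | k ≻ s}` is the disjoint union of the shadows of the children of `s`, so the children's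
contributions add up to `-μ(s)⁻¹ ∑_{k ≻ s} f(k)μ(k)` and cancel the tail of the first term.
At the root there is no term `t = s`, and `∑_{k ≻ a} f(k)μ(k) = -f(a)μ(a)` by the mean-zero
hypothesis.
-/

lemma hasSum_indicator_pi_single {α β : Type*} [AddCommMonoid α] [TopologicalSpace α]
    [DecidableEq β] (S : Set β) (b : β) (x : α) [Decidable (b ∈ S)] :
    HasSum (S.indicator (Pi.single b x)) (if b ∈ S then x else 0) := by
  split_ifs with hb
  · rw [Set.indicator_eq_self.mpr <|
      Pi.support_single_subset.trans (Set.singleton_subset_iff.mpr hb)]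
    exact hasSum_pi_single b x
  · convert hasSum_zero with t
    exact Set.indicator_apply_eq_zero.mpr fun ht ↦
      Pi.single_eq_of_ne (ne_of_mem_of_not_mem ht hb) _

section RootedTree

variable {V : Type*} {p : V → V} {a : V}

def children (p : V → V) (s : V) : Set V :=
  {t | p t = s ∧ t ≠ s}

lemma mem_shadow_self (t : V) : t ∈ shadow p t :=
  ⟨0, rfl⟩

lemma mem_shadow_of_parent_mem_shadow {k t : V} (hk : p k ∈ shadow p t) : k ∈ shadow p t := by
  obtain ⟨n, hn⟩ := hk
  exact ⟨n + 1, hn⟩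

lemma mem_shadow_parent_of_mem_shadow {k t : V} (hk : k ∈ shadow p t) : k ∈ shadow p (p t) := by
  obtain ⟨n, hn⟩ := hk
  exact ⟨n + 1, by rw [Function.iterate_succ_apply', hn]⟩

lemma parent_mem_shadow_of_mem_shadow {u t : V} (hu : u ∈ shadow p t) (hne : u ≠ t) :
    p u ∈ shadow p t := by
  obtain ⟨_ | n, hn⟩ := hu
  · exact absurd hn hne
  · exact ⟨n, hn⟩

lemma mem_shadow_or_mem_shadow_of_mem_shadow {k t₁ t₂ : V} (h₁ : k ∈ shadow p t₁)
    (h₂ : k ∈ shadow p t₂) : t₁ ∈ shadow p t₂ ∨ t₂ ∈ shadow p t₁ := by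
  obtain ⟨m, rfl⟩ := h₁
  obtain ⟨n, rfl⟩ := h₂
  rcases le_total m n with h | h
  · exact .inl ⟨n - m, by rw [← Function.iterate_add_apply, Nat.sub_add_cancel h]⟩
  · exact .inr ⟨m - n, by rw [← Function.iterate_add_apply, Nat.sub_add_cancel h]⟩

lemma children_subset_ne_root (hroot : p a = a) (s : V) : children p s ⊆ {t | t ≠ a} := by
  rintro t ⟨hts, hne⟩ rfl
  exact hne (hroot ▸ hts)

lemma eq_root_of_iterate_succ_eq_self (hroot : p a = a) (hreach : ∀ t, ∃ n, p^[n] t = a)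
    {s : V} {n : ℕ} (hs : p^[n + 1] s = s) : s = a := by
  obtain ⟨N, hN⟩ := hreach s
  have hperiodic : ∀ m, p^[(n + 1) * m] s = s := fun m ↦ Function.iterate_mul p (n + 1) m ▸
    Function.iterate_fixed hs m
  calc s = p^[(n + 1) * N - N] (p^[N] s) := by
        rw [← Function.iterate_add_apply, Nat.sub_add_cancel (Nat.le_mul_of_pos_left N n.succ_pos),
          hperiodic]
    _ = a := by rw [hN, Function.iterate_fixed hroot]

lemma notMem_shadow_of_mem_children (hroot : p a = a) (hreach : ∀ t, ∃ n, p^[n] t = a)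
    {s t : V} (ht : t ∈ children p s) : s ∉ shadow p t := by
  rintro ⟨n, hn⟩
  have hsa : s = a := eq_root_of_iterate_succ_eq_self hroot hreach
    (by rw [Function.iterate_succ_apply', hn, ht.1])
  subst hsa
  exact ht.2 (by rw [← hn, Function.iterate_fixed hroot])

lemma eq_of_mem_shadow_of_mem_children (hroot : p a = a) (hreach : ∀ t, ∃ n, p^[n] t = a)
    {s t₁ t₂ k : V} (ht₁ : t₁ ∈ children p s) (ht₂ : t₂ ∈ children p s)
    (hk₁ : k ∈ shadow p t₁) (hk₂ : k ∈ shadow p t₂) : t₁ = t₂ := by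
  by_contra hne
  rcases mem_shadow_or_mem_shadow_of_mem_shadow hk₁ hk₂ with h | h
  · exact notMem_shadow_of_mem_children hroot hreach ht₂ <|
      ht₁.1 ▸ parent_mem_shadow_of_mem_shadow h hne
  · exact notMem_shadow_of_mem_children hroot hreach ht₁ <|
      ht₂.1 ▸ parent_mem_shadow_of_mem_shadow h (Ne.symm hne)

lemma exists_mem_children_of_mem_shadow {s k : V} (hk : k ∈ shadow p s) (hne : k ≠ s) :
    ∃ t ∈ children p s, k ∈ shadow p t := by
  obtain ⟨n, hn⟩ := hk
  induction n generalizing k with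
  | zero => exact absurd hn hne
  | succ n ih =>
    by_cases hpk : p k = s
    · exact ⟨k, ⟨hpk, hne⟩, mem_shadow_self k⟩
    · obtain ⟨t, ht, hpkt⟩ := ih hpk hn
      exact ⟨t, ht, mem_shadow_of_parent_mem_shadow hpkt⟩

noncomputable def sigmaShadowChildrenEquiv (hroot : p a = a) (hreach : ∀ t, ∃ n, p^[n] t = a)
    (s : V) : (Σ t : children p s, shadow p t) ≃ {k // k ∈ shadow p s ∧ k ≠ s} :=
  Equiv.ofBijective
    (fun ⟨⟨t, ht⟩, ⟨k, hk⟩⟩ ↦ ⟨k, ht.1 ▸ mem_shadow_parent_of_mem_shadow hk,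
      fun hks ↦ notMem_shadow_of_mem_children hroot hreach ht (hks ▸ hk)⟩)
    ⟨by
      rintro ⟨t₁, k₁⟩ ⟨t₂, k₂⟩ h
      have hk : (k₁ : V) = k₂ := congrArg Subtype.val h
      obtain rfl : t₁ = t₂ := Subtype.ext <|
        eq_of_mem_shadow_of_mem_children hroot hreach t₁.2 t₂.2 k₁.2 (hk ▸ k₂.2)
      rw [Subtype.ext hk],
    fun ⟨k, hk, hne⟩ ↦
      let ⟨t, ht, hkt⟩ := exists_mem_children_of_mem_shadow hk hne
      ⟨⟨⟨t, ht⟩, ⟨k, hkt⟩⟩, rfl⟩⟩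

lemma hasSum_tsum_shadow_children (hroot : p a = a) (hreach : ∀ t, ∃ n, p^[n] t = a)
    {g : V → ℝ} (hg : Summable g) (s : V) :
    HasSum (fun t : children p s ↦ ∑' k : shadow p t, g k)
      (∑' k : {k // k ∈ shadow p s ∧ k ≠ s}, g k) := by
  have hsigma := (sigmaShadowChildrenEquiv hroot hreach s).hasSum_iff.mpr
    (hg.comp_injective Subtype.val_injective).hasSum
  exact hsigma.sigma fun t ↦ (hg.comp_injective Subtype.val_injective).hasSum

lemma tsum_shadow_root_ne_eq_tsum_sub (hreach : ∀ t, ∃ n, p^[n] t = a) {g : V → ℝ} (hg : Summable g) :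
    ∑' k : {k // k ∈ shadow p a ∧ k ≠ a}, g k = ∑' k, g k - g a := by
  have hset : {k | k ∈ shadow p a ∧ k ≠ a} = {a}ᶜ := by
    ext k
    simpa [shadow] using fun _ ↦ hreach k
  rw [← hg.tsum_subtype_add_tsum_subtype_compl {a}, tsum_singleton]
  change ∑' k : ({k | k ∈ shadow p a ∧ k ≠ a} : Set V), g k = _
  rw [hset]
  ring

end RootedTree

lemma decompFn_apply_eq_single_add_indicator {V : Type*} (p : V → V) (μ f : V → ℝ) (s : V) :
    (fun t ↦ decompFn p μ f t s) =
      Pi.single s (f s + 1 / μ s * ∑' k : {k // k ∈ shadow p s ∧ k ≠ s}, f k * μ k) +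
        (children p s).indicator fun t ↦ -(1 / μ s * ∑' k : shadow p t, f k * μ k) := by
  ext t
  by_cases hts : t = s
  · subst hts
    simp [decompFn, children]
  · by_cases hpt : p t = s
    · subst hpt
      simp [decompFn, children, hts, Ne.symm hts]
    · simp [decompFn, children, hts, Ne.symm hts, hpt, Ne.symm hpt]

theorem decomp_of_mean_zero_general {V : Type*} (p : V → V) (a : V)
    (hroot : p a = a) (hreach : ∀ t : V, ∃ n : ℕ, p^[n] t = a)
    (μ : V → ℝ) (hμpos : ∀ t, 0 < μ t)
    (f : V → ℝ) (hf : Summable fun s => |f s| * μ s)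
    (hmean : (∑' s : V, f s * μ s) = 0) :
    ∀ s : V, HasSum (fun t : {t : V // t ≠ a} => decompFn p μ f t.1 s) (f s) := by
  intro s
  have hg : Summable fun k ↦ f k * μ k :=
    hf.of_norm_bounded fun k ↦ by rw [Real.norm_eq_abs, abs_mul, abs_of_pos (hμpos k)]
  set P := ∑' k : {k // k ∈ shadow p s ∧ k ≠ s}, f k * μ k with hP
  have hsingle := hasSum_indicator_pi_single {t | t ≠ a} s (f s + 1 / μ s * P)
  have hbranch : HasSum ((children p s).indicator fun t ↦ -(1 / μ s * ∑' k : shadow p t, f k * μ k))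
      (-(1 / μ s * P)) := hasSum_subtype_iff_indicator.mp
    ((hasSum_tsum_shadow_children hroot hreach hg s).mul_left (1 / μ s)).neg
  change HasSum ((fun t ↦ decompFn p μ f t s) ∘ Subtype.val : {t | t ≠ a} → ℝ) (f s)
  rw [hasSum_subtype_iff_indicator, decompFn_apply_eq_single_add_indicator, Set.indicator_add',
    Set.indicator_indicator, Set.inter_eq_right.mpr (children_subset_ne_root hroot s)]
  convert hsingle.add hbranch using 1
  · rfl
  split_ifs with hsa
  · ring
  · obtain rfl : s = a := not_not.mp hsa
    rw [hP, tsum_shadow_root_ne_eq_tsum_sub hreach hg, hmean]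
    field_simp [(hμpos s).ne']
    ring

/-- The decomposition `f(s) = ∑_{t ≠ a} f_t(s)` holds at every vertex `s` (including the
root, using the mean-zero hypothesis), the sum converging to `f(s)`. -/
theorem decomp_of_mean_zero {V : Type*} [Countable V] (p : V → V) (a : V)
    (hroot : p a = a) (hreach : ∀ t : V, ∃ n : ℕ, p^[n] t = a)
    (μ : V → ℝ) (hμpos : ∀ t, 0 < μ t) (hμsum : Summable μ)
    (f : V → ℝ) (hf : Summable fun s => |f s| * μ s)
    (hmean : (∑' s : V, f s * μ s) = 0) :
    ∀ s : V, HasSum (fun t : {t : V // t ≠ a} => decompFn p μ f t.1 s) (f s) :=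
  decomp_of_mean_zero_general p a hroot hreach μ hμpos f hf hmean
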